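/- arXiv:2002.09624 — 11 statements merged into one kernel-verified Lean document; each statement's English description precedes it below -/
import Mathlib

section
/- Let N ≥ 2, let Γ : Fin N → ℝ, and let z : ℝ → Fin N → ℂ be differentiable on an open interval J with pairwise distinct positions, satisfying the point-vortex system dz_m/dt = (−1/(2πi)) ∑_{n≠m} Γ_n / (conj(z_m) − conj(z_n)) on J. Then the Hamiltonian H(t) = −(1/(2π)) ∑_{m<n} Γ_m Γ_n log |z_m(t) − z_n(t)| is constant on J. -/
open Finset ComplexConjugate

/-!
Differentiating `log |z_m - z_n|` gives `Re((ż_m - ż_n)/(z_m - z_n))`; symmetrising the double sum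
turns `dH/dt` into `-(1/2π) Re ∑_m Γ_m ż_m S_m` with `S_m = ∑_{n≠m} Γ_n/(z_m - z_n)`. The equations
of motion say `ż_m = c · conj S_m` with `c = -1/(2πi)` purely imaginary, so each term
`Γ_m c |S_m|²` is imaginary and `dH/dt = 0`.
-/

open scoped RealInnerProductSpace in
theorem HasDerivAt.log_norm {F : Type*} [NormedAddCommGroup F] [InnerProductSpace ℝ F]
    {f : ℝ → F} {f' : F} {t : ℝ} (hf : HasDerivAt f f' t) (hft : f t ≠ 0) :
    HasDerivAt (fun s => Real.log ‖f s‖) (⟪f t, f'⟫ / ‖f t‖ ^ 2) t := by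
  have hlog : (fun s => Real.log ‖f s‖) = fun s => Real.log (‖f s‖ ^ 2) / 2 := by
    ext s
    rw [Real.log_pow]
    push_cast
    ring
  rw [hlog]
  exact ((hf.norm_sq.log (by positivity)).div_const 2).congr_deriv (by ring)

theorem HasDerivAt.log_norm_complex {f : ℝ → ℂ} {f' : ℂ} {t : ℝ} (hf : HasDerivAt f f' t)
    (hft : f t ≠ 0) : HasDerivAt (fun s => Real.log ‖f s‖) (f' / f t).re t := by
  convert hf.log_norm hft using 1
  rw [Complex.inner, Complex.div_re, ← Complex.normSq_eq_norm_sq]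
  simp only [Complex.mul_re, Complex.conj_re, Complex.conj_im]
  ring

theorem Finset.sum_sum_lt_add_swap_eq_sum_erase {ι M : Type*} [Fintype ι] [LinearOrder ι]
    [AddCommMonoid M] (G : ι → ι → M) :
    ∑ m, ∑ n ∈ univ.filter (m < ·), (G m n + G n m) = ∑ m, ∑ n ∈ univ.erase m, G m n := by
  have hswap : ∑ m, ∑ n ∈ univ.filter (m < ·), G n m
      = ∑ m, ∑ n ∈ univ.filter (· < m), G m n := sum_comm' (by simp)
  simp only [sum_add_distrib]
  rw [hswap, ← sum_add_distrib]
  refine sum_congr rfl fun m _ => ?_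
  rw [← sum_union (disjoint_filter.2 fun n _ h h' => lt_asymm h h')]
  congr 1
  ext n
  simp [ne_comm]

section PointVortex

variable {ι : Type*} [Fintype ι]

noncomputable def hamiltonian [LinearOrder ι] (Γ : ι → ℝ) (ζ : ι → ℂ) : ℝ :=
  -(1 / (2 * Real.pi)) * ∑ m, ∑ n ∈ univ.filter (m < ·), Γ m * Γ n * Real.log ‖ζ m - ζ n‖

noncomputable def vortexSum [DecidableEq ι] (Γ : ι → ℝ) (ζ : ι → ℂ) (m : ι) : ℂ :=
  ∑ n ∈ univ.erase m, (Γ n : ℂ) / (ζ m - ζ n)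

theorem conj_vortexSum [DecidableEq ι] (Γ : ι → ℝ) (ζ : ι → ℂ) (m : ι) :
    conj (vortexSum Γ ζ m) = ∑ n ∈ univ.erase m, (Γ n : ℂ) / (conj (ζ m) - conj (ζ n)) := by
  simp [vortexSum, map_sum]

theorem sum_sum_lt_re_div_sub_eq [LinearOrder ι] (Γ : ι → ℝ) (ζ w : ι → ℂ) :
    ∑ m, ∑ n ∈ univ.filter (m < ·), Γ m * Γ n * ((w m - w n) / (ζ m - ζ n)).re
      = (∑ m, Γ m * w m * vortexSum Γ ζ m).re := by
  simp only [vortexSum, mul_sum, Complex.re_sum, ← Complex.re_ofReal_mul, Complex.ofReal_mul]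
  rw [← sum_sum_lt_add_swap_eq_sum_erase]
  refine sum_congr rfl fun m _ => sum_congr rfl fun n _ => ?_
  rw [← Complex.add_re, ← neg_sub (ζ m), div_neg]
  congr 1
  ring

theorem re_sum_mul_conj_vortexSum_eq_zero [DecidableEq ι] (Γ : ι → ℝ) (ζ : ι → ℂ) {c : ℂ}
    (hc : c.re = 0) : (∑ m, Γ m * (c * conj (vortexSum Γ ζ m)) * vortexSum Γ ζ m).re = 0 := by
  have hterm : ∀ m, Γ m * (c * conj (vortexSum Γ ζ m)) * vortexSum Γ ζ m
      = c * ((Γ m * Complex.normSq (vortexSum Γ ζ m) : ℝ) : ℂ) := by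
    intro m
    rw [Complex.ofReal_mul, Complex.normSq_eq_conj_mul_self]
    ring
  simp [hterm, Complex.re_sum, hc]

theorem hasDerivAt_hamiltonian [LinearOrder ι] (Γ : ι → ℝ) {z : ℝ → ι → ℂ} {w : ι → ℂ} {t : ℝ}
    (hz : ∀ m, HasDerivAt (fun s => z s m) (w m) t) (hdist : Pairwise fun m n => z t m ≠ z t n) :
    HasDerivAt (fun s => hamiltonian Γ (z s))
      (-(1 / (2 * Real.pi)) * (∑ m, Γ m * w m * vortexSum Γ (z t) m).re) t := by
  rw [← sum_sum_lt_re_div_sub_eq]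
  refine .const_mul _ (.fun_sum fun m _ => .fun_sum fun n hn => .const_mul _ ?_)
  exact ((hz m).sub (hz n)).log_norm_complex
    (sub_ne_zero.2 (hdist (Finset.mem_filter.1 hn).2.ne))

end PointVortex

theorem hamiltonian_invariant_general (N : ℕ) (Γ : Fin N → ℝ) (a b : ℝ)
    (z : ℝ → Fin N → ℂ)
    (hdist : ∀ t ∈ Set.Ioo a b, ∀ m n : Fin N, m ≠ n → z t m ≠ z t n)
    (hode : ∀ t ∈ Set.Ioo a b, ∀ m : Fin N,
      HasDerivAt (fun s => z s m)
        (-1 / (2 * (Real.pi : ℂ) * Complex.I) *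
          ∑ n ∈ Finset.univ.erase m, (Γ n : ℂ) / (conj (z t m) - conj (z t n))) t) :
    ∀ t ∈ Set.Ioo a b, ∀ s ∈ Set.Ioo a b,
      -(1 / (2 * Real.pi)) * ∑ m, ∑ n ∈ Finset.univ.filter (fun n => m < n),
          Γ m * Γ n * Real.log ‖z t m - z t n‖
      = -(1 / (2 * Real.pi)) * ∑ m, ∑ n ∈ Finset.univ.filter (fun n => m < n),
          Γ m * Γ n * Real.log ‖z s m - z s n‖ := by
  have hc : (-1 / (2 * (Real.pi : ℂ) * Complex.I)).re = 0 := by simp [Complex.div_re]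
  simp_rw [← conj_vortexSum] at hode
  have hderiv : ∀ x ∈ Set.Ioo a b, HasDerivAt (fun s => hamiltonian Γ (z s)) 0 x := by
    intro x hx
    simpa [re_sum_mul_conj_vortexSum_eq_zero Γ (z x) hc] using
      hasDerivAt_hamiltonian Γ (hode x hx) fun m n => hdist x hx m n
  intro t ht s hs
  exact isOpen_Ioo.is_const_of_deriv_eq_zero isPreconnected_Ioo
    (fun x hx => (hderiv x hx).differentiableAt.differentiableWithinAt)
    (fun x hx => (hderiv x hx).deriv) ht hs

/-- For solutions of the point-vortex system on an open interval, the Hamiltonian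
`H(t) = -(1/(2π)) ∑_{m<n} Γ_m Γ_n log |z_m(t) - z_n(t)|` is constant. -/
theorem hamiltonian_invariant (N : ℕ) (hN : 2 ≤ N) (Γ : Fin N → ℝ) (a b : ℝ)
    (z : ℝ → Fin N → ℂ)
    (hdiff : ∀ t ∈ Set.Ioo a b, ∀ m : Fin N, DifferentiableAt ℝ (fun s => z s m) t)
    (hdist : ∀ t ∈ Set.Ioo a b, ∀ m n : Fin N, m ≠ n → z t m ≠ z t n)
    (hode : ∀ t ∈ Set.Ioo a b, ∀ m : Fin N,
      HasDerivAt (fun s => z s m)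
        (-1 / (2 * (Real.pi : ℂ) * Complex.I) *
          ∑ n ∈ Finset.univ.erase m, (Γ n : ℂ) / (conj (z t m) - conj (z t n))) t) :
    ∀ t ∈ Set.Ioo a b, ∀ s ∈ Set.Ioo a b,
      -(1 / (2 * Real.pi)) * ∑ m, ∑ n ∈ Finset.univ.filter (fun n => m < n),
          Γ m * Γ n * Real.log ‖z t m - z t n‖
      = -(1 / (2 * Real.pi)) * ∑ m, ∑ n ∈ Finset.univ.filter (fun n => m < n),
          Γ m * Γ n * Real.log ‖z s m - z s n‖ :=
  hamiltonian_invariant_general N Γ a b z hdist hode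
end

section
/- Let N ≥ 2, let Γ : Fin N → ℝ, and let k : Fin N → ℂ be pairwise distinct and nonzero points such that for every m, (i/(2π k_m)) ∑_{n≠m} Γ_n / (conj(k_m) − conj(k_n)) = A + iB for fixed real constants A ≠ 0 and B. Define z_m(t) = k_m · √(2At + 1) · exp(i (B/(2A)) log(2At + 1)). Then on the interval {t : 2At + 1 > 0}, z satisfies the point-vortex system dz_m/dt = (−1/(2πi)) ∑_{n≠m} Γ_n / (conj(z_m) − conj(z_n)). -/
/-!
Write `C = A + iB`. The point-vortex velocity field is homogeneous of degree `-1` under complex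
scaling: multiplying every vortex by `w` divides every velocity by `conj w`. Self-similarity says
that the velocity of `k_m` is `C k_m`, so `z_m = k_m φ` moves with velocity `C k_m / conj φ`.
For `φ(t) = √r · exp(i β log r)`, `r = 2At + 1`, one has `φ conj φ = r`, hence
`φ' = (1/2 + iβ) r' φ / r = (1/2 + iβ) r' / conj φ`, and `(1/2 + iβ) · 2A = C` for `β = B/(2A)`.
-/

open Finset ComplexConjugate

namespace PointVortex

section Velocity

variable {ι : Type*} [Fintype ι] [DecidableEq ι]

noncomputable def velocity (Γ : ι → ℝ) (z : ι → ℂ) (m : ι) : ℂ :=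
  -1 / (2 * (Real.pi : ℂ) * Complex.I) *
    ∑ n ∈ univ.erase m, (Γ n : ℂ) / (conj (z m) - conj (z n))

theorem velocity_mul_const (Γ : ι → ℝ) (z : ι → ℂ) (w : ℂ) (m : ι) :
    velocity Γ (fun n => z n * w) m = velocity Γ z m / conj w := by
  simp only [velocity, map_mul, ← sub_mul, ← div_div, ← sum_div, mul_div_assoc]

theorem I_div_mul_sum_eq_velocity_div (Γ : ι → ℝ) (z : ι → ℂ) (m : ι) :
    Complex.I / (2 * (Real.pi : ℂ) * z m) *
        ∑ n ∈ univ.erase m, (Γ n : ℂ) / (conj (z m) - conj (z n)) =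
      velocity Γ z m / z m := by
  simp only [velocity, div_eq_mul_inv, mul_inv, Complex.inv_I]
  ring

theorem velocity_eq_of_selfSimilar {Γ : ι → ℝ} {k : ι → ℂ} {C : ℂ} {m : ι} (hk : k m ≠ 0)
    (h : Complex.I / (2 * (Real.pi : ℂ) * k m) *
        ∑ n ∈ univ.erase m, (Γ n : ℂ) / (conj (k m) - conj (k n)) = C) :
    velocity Γ k m = C * k m := by
  rwa [I_div_mul_sum_eq_velocity_div, div_eq_iff hk] at h

end Velocity

noncomputable def spiralScale (β x : ℝ) : ℂ :=
  (Real.sqrt x : ℂ) * Complex.exp (Complex.I * (β : ℂ) * (Real.log x : ℂ))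

theorem spiralScale_mul_conj (β : ℝ) {x : ℝ} (hx : 0 ≤ x) :
    spiralScale β x * conj (spiralScale β x) = x := by
  rw [spiralScale, map_mul, ← Complex.exp_conj, mul_mul_mul_comm, ← Complex.exp_add]
  simp only [map_mul, Complex.conj_I, Complex.conj_ofReal, neg_mul, add_neg_cancel,
    Complex.exp_zero, mul_one]
  exact_mod_cast Real.mul_self_sqrt hx

theorem hasDerivAt_spiralScale {r : ℝ → ℝ} {r' t : ℝ} (hr : HasDerivAt r r' t) (hpos : 0 < r t)
    (β : ℝ) :
    HasDerivAt (fun s => spiralScale β (r s))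
      ((1 / 2 + Complex.I * β) * r' / conj (spiralScale β (r t))) t := by
  have hsqrt := ((Real.hasDerivAt_sqrt hpos.ne').comp t hr).ofReal_comp
  have hexp := ((hr.log hpos.ne').ofReal_comp.const_mul (Complex.I * β)).cexp
  refine (hsqrt.mul hexp).congr_deriv ?_
  have hsqrt0 : (Real.sqrt (r t) : ℂ) ≠ 0 := by exact_mod_cast (Real.sqrt_pos.mpr hpos).ne'
  have hsq : (r t : ℂ) = Real.sqrt (r t) * Real.sqrt (r t) := by
    exact_mod_cast (Real.mul_self_sqrt hpos.le).symm
  have hconj : conj (spiralScale β (r t)) = r t / spiralScale β (r t) := by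
    rw [eq_div_iff, mul_comm, spiralScale_mul_conj β hpos.le]
    simp [spiralScale, hsqrt0, Complex.exp_ne_zero]
  rw [hconj, spiralScale]
  push_cast [Function.comp_apply]
  rw [hsq]
  field_simp

end PointVortex

open PointVortex

theorem self_similar_solution_formula_general (N : ℕ) (Γ : Fin N → ℝ)
    (k : Fin N → ℂ)
    (hk0 : ∀ m, k m ≠ 0)
    (A B : ℝ) (hA : A ≠ 0)
    (hss : ∀ m : Fin N,
      Complex.I / (2 * (Real.pi : ℂ) * k m) *
          ∑ n ∈ Finset.univ.erase m, (Γ n : ℂ) / (conj (k m) - conj (k n))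
        = (A : ℂ) + (B : ℂ) * Complex.I)
    (z : ℝ → Fin N → ℂ)
    (hz : ∀ t m, z t m = k m * (Real.sqrt (2 * A * t + 1) : ℂ) *
      Complex.exp (Complex.I * ((B / (2 * A) : ℝ) : ℂ) *
        ((Real.log (2 * A * t + 1) : ℝ) : ℂ))) :
    ∀ t : ℝ, 0 < 2 * A * t + 1 → ∀ m : Fin N,
      HasDerivAt (fun s => z s m)
        (-1 / (2 * (Real.pi : ℂ) * Complex.I) *
          ∑ n ∈ Finset.univ.erase m, (Γ n : ℂ) / (conj (z t m) - conj (z t n))) t := by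
  intro t ht m
  have hz' : ∀ s, z s = fun n => k n * spiralScale (B / (2 * A)) (2 * A * s + 1) :=
    fun s => funext fun n => by rw [hz, spiralScale, mul_assoc]
  have hr : HasDerivAt (fun s : ℝ => 2 * A * s + 1) (2 * A) t := by
    simpa using ((hasDerivAt_id t).const_mul (2 * A)).add_const 1
  have hscale := (hasDerivAt_spiralScale hr ht (B / (2 * A))).const_mul (k m)
  change HasDerivAt (fun s => z s m) (velocity Γ (z t) m) t
  simp only [hz', velocity_mul_const, velocity_eq_of_selfSimilar (hk0 m) (hss m)]
  refine hscale.congr_deriv ?_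
  have hC : (1 / 2 + Complex.I * ((B / (2 * A) : ℝ) : ℂ)) * ((2 * A : ℝ) : ℂ) =
      A + B * Complex.I := by
    have hA' : (A : ℂ) ≠ 0 := Complex.ofReal_ne_zero.mpr hA
    push_cast
    field_simp
  rw [mul_div_assoc', hC]
  ring

/-- If the configuration `k` is self-similar with constant `C = A + iB`, `A ≠ 0`, then
`z_m(t) = k_m √(2At+1) exp(i (B/(2A)) log(2At+1))` solves the point-vortex system on
`{t : 2At + 1 > 0}`. -/
theorem self_similar_solution_formula (N : ℕ) (hN : 2 ≤ N) (Γ : Fin N → ℝ)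
    (k : Fin N → ℂ)
    (hk : ∀ m n : Fin N, m ≠ n → k m ≠ k n) (hk0 : ∀ m, k m ≠ 0)
    (A B : ℝ) (hA : A ≠ 0)
    (hss : ∀ m : Fin N,
      Complex.I / (2 * (Real.pi : ℂ) * k m) *
          ∑ n ∈ Finset.univ.erase m, (Γ n : ℂ) / (conj (k m) - conj (k n))
        = (A : ℂ) + (B : ℂ) * Complex.I)
    (z : ℝ → Fin N → ℂ)
    (hz : ∀ t m, z t m = k m * (Real.sqrt (2 * A * t + 1) : ℂ) *
      Complex.exp (Complex.I * ((B / (2 * A) : ℝ) : ℂ) *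
        ((Real.log (2 * A * t + 1) : ℝ) : ℂ))) :
    ∀ t : ℝ, 0 < 2 * A * t + 1 → ∀ m : Fin N,
      HasDerivAt (fun s => z s m)
        (-1 / (2 * (Real.pi : ℂ) * Complex.I) *
          ∑ n ∈ Finset.univ.erase m, (Γ n : ℂ) / (conj (z t m) - conj (z t n))) t :=
  self_similar_solution_formula_general N Γ k hk0 A B hA hss z hz
end

section
/- Let N ≥ 2, let Γ : Fin N → ℝ, and let k : Fin N → ℂ be pairwise distinct and nonzero points such that for every m, (i/(2π k_m)) ∑_{n≠m} Γ_n / (conj(k_m) − conj(k_n)) = C for a fixed C ∈ ℂ. Then for every pair of distinct indices m ≠ n, −2πi |k_m − k_n|² C = Γ_m + Γ_n + ∑_{l≠m, l≠n} Γ_l · [ (k_l − k_n)(conj(k_m) − conj(k_n)) / |k_n − k_l|² + (k_l − k_m)(conj(k_n) − conj(k_m)) / |k_l − k_m|² ]. -/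
open Finset ComplexConjugate

private lemma solveI (S X : ℂ) (h : Complex.I * S = X) : S = -Complex.I * X := by
  linear_combination -Complex.I * h + S * Complex.I_sq

private lemma abs_sq_cast (z : ℂ) : ((‖z‖ ^ 2 : ℝ) : ℂ) = z * conj z := by
  rw [Complex.sq_norm, Complex.mul_conj]

/-- For a self-similar configuration with constant `C`, for any pair `m ≠ n`,
`-2πi |k_m - k_n|² C = Γ_m + Γ_n + ∑_{l≠m,n} Γ_l [ (k_l-k_n)conj(k_m-k_n)/|k_n-k_l|²
  + (k_l-k_m)conj(k_n-k_m)/|k_l-k_m|² ]`. -/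
theorem self_similar_pair_identity (N : ℕ) (hN : 2 ≤ N) (Γ : Fin N → ℝ) (k : Fin N → ℂ)
    (hk : ∀ m n : Fin N, m ≠ n → k m ≠ k n) (hk0 : ∀ m, k m ≠ 0)
    (C : ℂ)
    (hss : ∀ m : Fin N,
      Complex.I / (2 * (Real.pi : ℂ) * k m) *
          ∑ n ∈ Finset.univ.erase m, (Γ n : ℂ) / (conj (k m) - conj (k n))
        = C) :
    ∀ m n : Fin N, m ≠ n →
      -2 * (Real.pi : ℂ) * Complex.I * ((‖k m - k n‖ ^ 2 : ℝ) : ℂ) * C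
        = (Γ m : ℂ) + (Γ n : ℂ) + ∑ l ∈ (Finset.univ.erase m).erase n,
            (Γ l : ℂ) *
              ((k l - k n) * conj (k m - k n) / ((‖k n - k l‖ ^ 2 : ℝ) : ℂ)
                + (k l - k m) * conj (k n - k m) / ((‖k l - k m‖ ^ 2 : ℝ) : ℂ)) := by
  intro m n hmn
  have hπ : (Real.pi : ℂ) ≠ 0 := by exact_mod_cast Real.pi_ne_zero
  have hsub : ∀ a b : Fin N, a ≠ b → conj (k a) - conj (k b) ≠ 0 := by
    intro a b hab
    rw [← map_sub, map_ne_zero]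
    exact sub_ne_zero.mpr (hk a b hab)
  -- extract the two self-similarity equations
  have hEq : ∀ p : Fin N,
      (∑ q ∈ Finset.univ.erase p, (Γ q : ℂ) / (conj (k p) - conj (k q)))
        = -Complex.I * (C * (2 * (Real.pi : ℂ) * k p)) := by
    intro p
    have h := hss p
    have hne : (2 * (Real.pi : ℂ) * k p) ≠ 0 := by
      simp [hπ, hk0 p]
    rw [div_mul_eq_mul_div, div_eq_iff hne] at h
    exact solveI _ _ h
  have hSm := hEq m
  have hSn := hEq n
  have hnm : n ∈ Finset.univ.erase m := by simp [hmn.symm]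
  have hmn' : m ∈ Finset.univ.erase n := by simp [hmn]
  rw [← Finset.add_sum_erase _ _ hnm] at hSm
  rw [← Finset.add_sum_erase _ _ hmn'] at hSn
  rw [Finset.erase_right_comm] at hSn
  set s := (Finset.univ.erase m).erase n with hs
  have c := conj (k m - k n)
  -- rewrite the goal sum
  have key : (∑ l ∈ s,
      (Γ l : ℂ) *
        ((k l - k n) * conj (k m - k n) / ((‖k n - k l‖ ^ 2 : ℝ) : ℂ)
          + (k l - k m) * conj (k n - k m) / ((‖k l - k m‖ ^ 2 : ℝ) : ℂ)))
      = conj (k m - k n) * (∑ l ∈ s, (Γ l : ℂ) / (conj (k m) - conj (k l)))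
        - conj (k m - k n) * (∑ l ∈ s, (Γ l : ℂ) / (conj (k n) - conj (k l))) := by
    rw [← mul_sub, ← Finset.sum_sub_distrib, Finset.mul_sum]
    refine Finset.sum_congr rfl ?_
    intro l hl
    have hln : l ≠ n := (Finset.mem_erase.mp hl).1
    have hlm : l ≠ m := (Finset.mem_erase.mp (Finset.mem_erase.mp hl).2).1
    have h1 : (k n - k l) ≠ 0 := sub_ne_zero.mpr (hk n l (Ne.symm hln))
    have h2 : (k l - k m) ≠ 0 := sub_ne_zero.mpr (hk l m hlm)
    have h3 := hsub m l hlm.symm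
    have h4 := hsub n l hln.symm
    have h1' : conj (k n - k l) ≠ 0 := by rw [map_ne_zero]; exact h1
    have h2' : conj (k l - k m) ≠ 0 := by rw [map_ne_zero]; exact h2
    rw [abs_sq_cast, abs_sq_cast]
    rw [map_sub, map_sub, map_sub] at *
    simp only [map_sub]
    field_simp
    ring
  rw [key, abs_sq_cast, map_sub]
  have h1 : (Γ n : ℂ) / (conj (k m) - conj (k n)) * (conj (k m) - conj (k n)) = (Γ n : ℂ) :=
    div_mul_cancel₀ _ (hsub m n hmn)
  have h2 : (Γ m : ℂ) / (conj (k n) - conj (k m)) * (conj (k m) - conj (k n)) = -(Γ m : ℂ) := by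
    rw [div_mul_eq_mul_div, div_eq_iff (hsub n m hmn.symm)]
    ring
  linear_combination (-(conj (k m) - conj (k n))) * hSm + (conj (k m) - conj (k n)) * hSn
    + h1 - h2
end

section
/- Let N ≥ 2, let Γ : Fin N → ℝ, and let k : Fin N → ℂ be pairwise distinct and nonzero points such that for every m, (i/(2π k_m)) ∑_{n≠m} Γ_n / (conj(k_m) − conj(k_n)) = A + iB with A, B ∈ ℝ. Then for every pair of distinct indices m ≠ n, A = (1/(π |k_m − k_n|²)) ∑_{l≠m, l≠n} Γ_l · S_mnl · ( 1/|k_n − k_l|² − 1/|k_l − k_m|² ), where S_mnl = (1/2) Im[ (conj(k_n) − conj(k_m)) (k_l − k_m) ] is the signed area of the triangle with vertices k_m, k_n, k_l (positive when m, n, l appear counterclockwise). -/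
open Finset ComplexConjugate

private lemma key_im (u v : ℂ) (hu : u ≠ 0) (hv : v ≠ 0) :
    ((conj u - conj v) * (1 / conj u - 1 / conj v)).im
      = (conj (v - u) * (0 - u)).im * (1 / ‖u‖ ^ 2 - 1 / ‖v‖ ^ 2) := by
  rw [Complex.sq_norm, Complex.sq_norm]
  have hnu : Complex.normSq u ≠ 0 := fun h => hu (Complex.normSq_eq_zero.mp h)
  have hnv : Complex.normSq v ≠ 0 := fun h => hv (Complex.normSq_eq_zero.mp h)
  obtain ⟨p, q⟩ := u
  obtain ⟨r, s⟩ := v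
  simp only [Complex.normSq_apply, Complex.div_im, Complex.div_re, Complex.mul_im,
    Complex.mul_re, Complex.sub_im, Complex.sub_re, Complex.one_im, Complex.one_re,
    Complex.zero_im, Complex.zero_re, Complex.conj_im, Complex.conj_re,
    Complex.normSq_mk] at *
  field_simp
  ring

/-- Formula for the real part `A` of the self-similar constant: for any pair `m ≠ n`,
`A = (1/(π |k_m-k_n|²)) ∑_{l≠m,n} Γ_l S_mnl (1/|k_n-k_l|² - 1/|k_l-k_m|²)`, where
`S_mnl = (1/2) Im[conj(k_n - k_m)(k_l - k_m)]` is the signed area of the triangle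
`(k_m, k_n, k_l)`. -/
theorem self_similar_A_formula (N : ℕ) (hN : 2 ≤ N) (Γ : Fin N → ℝ) (k : Fin N → ℂ)
    (hk : ∀ m n : Fin N, m ≠ n → k m ≠ k n) (hk0 : ∀ m, k m ≠ 0)
    (A B : ℝ)
    (hss : ∀ m : Fin N,
      Complex.I / (2 * (Real.pi : ℂ) * k m) *
          ∑ n ∈ Finset.univ.erase m, (Γ n : ℂ) / (conj (k m) - conj (k n))
        = (A : ℂ) + (B : ℂ) * Complex.I) :
    ∀ m n : Fin N, m ≠ n →
      A = 1 / (Real.pi * ‖k m - k n‖ ^ 2) *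
        ∑ l ∈ (Finset.univ.erase m).erase n,
          Γ l * ((1 / 2) * (conj (k n - k m) * (k l - k m)).im) *
            (1 / ‖k n - k l‖ ^ 2 - 1 / ‖k l - k m‖ ^ 2) := by
  intro m n hmn
  classical
  have hπ : (Real.pi : ℂ) ≠ 0 := by exact_mod_cast Real.pi_ne_zero
  have hd : k m - k n ≠ 0 := sub_ne_zero.mpr (hk m n hmn)
  set d : ℂ := k m - k n with hd_def
  have hcd : conj (k m) - conj (k n) ≠ 0 := by
    rw [← map_sub]
    exact fun h0 => hd (by simpa using congrArg conj h0)
  -- clear denominators in the self-similarity hypotheses at m and n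
  have hm := hss m
  have hn := hss n
  have h2m : (2 * (Real.pi : ℂ) * k m) ≠ 0 := by
    simp [hπ, hk0 m, Complex.ofReal_ne_zero]
  have h2n : (2 * (Real.pi : ℂ) * k n) ≠ 0 := by
    simp [hπ, hk0 n, Complex.ofReal_ne_zero]
  rw [div_mul_eq_mul_div, div_eq_iff h2m] at hm
  rw [div_mul_eq_mul_div, div_eq_iff h2n] at hn
  -- split off the n-term from S_m and the m-term from S_n
  have hnm : n ∈ Finset.univ.erase m := by simp [Ne.symm hmn]
  have hmn' : m ∈ Finset.univ.erase n := by simp [hmn]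
  have hsplitm : ∑ p ∈ Finset.univ.erase m, (Γ p : ℂ) / (conj (k m) - conj (k p))
      = (Γ n : ℂ) / (conj (k m) - conj (k n)) +
        ∑ l ∈ (Finset.univ.erase m).erase n, (Γ l : ℂ) / (conj (k m) - conj (k l)) :=
    (Finset.add_sum_erase _ _ hnm).symm
  have hsplitn : ∑ p ∈ Finset.univ.erase n, (Γ p : ℂ) / (conj (k n) - conj (k p))
      = (Γ m : ℂ) / (conj (k n) - conj (k m)) +
        ∑ l ∈ (Finset.univ.erase m).erase n, (Γ l : ℂ) / (conj (k n) - conj (k l)) := by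
    rw [Finset.erase_right_comm]
    exact (Finset.add_sum_erase _ _ hmn').symm
  have hc1 : conj d * ((Γ n : ℂ) / (conj (k m) - conj (k n))) = (Γ n : ℂ) := by
    rw [show conj d = conj (k m) - conj (k n) by rw [hd_def, map_sub]]
    rw [mul_comm, div_mul_cancel₀ _ hcd]
  have hc2 : conj d * ((Γ m : ℂ) / (conj (k n) - conj (k m))) = -(Γ m : ℂ) := by
    rw [show conj (k n) - conj (k m) = -(conj (k m) - conj (k n)) by ring]
    rw [show conj d = conj (k m) - conj (k n) by rw [hd_def, map_sub]]
    rw [div_neg, mul_neg, mul_comm, div_mul_cancel₀ _ hcd]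
  -- the key complex identity
  have hE : ∑ l ∈ (Finset.univ.erase m).erase n,
        (conj d * ((Γ l : ℂ) / (conj (k m) - conj (k l)))
          - conj d * ((Γ l : ℂ) / (conj (k n) - conj (k l))))
      = -2 * (Real.pi : ℂ) * Complex.I * ((A : ℂ) + (B : ℂ) * Complex.I) * (conj d * d)
        - (Γ n : ℂ) - (Γ m : ℂ) := by
    rw [Finset.sum_sub_distrib, ← Finset.mul_sum, ← Finset.mul_sum]
    linear_combination (-(conj d)) * hsplitm + (conj d) * hsplitn - hc1 + hc2
      + (-(Complex.I * conj d)) * hm + (Complex.I * conj d) * hn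
      + (conj d * ((∑ p ∈ Finset.univ.erase m, (Γ p : ℂ) / (conj (k m) - conj (k p)))
          - ∑ p ∈ Finset.univ.erase n, (Γ p : ℂ) / (conj (k n) - conj (k p))))
        * Complex.I_mul_I
  -- take imaginary parts
  have hIm := congrArg Complex.im hE
  rw [Complex.im_sum] at hIm
  have hdd : conj d * d = ((‖d‖ ^ 2 : ℝ) : ℂ) := by
    rw [Complex.sq_norm, mul_comm, Complex.mul_conj]
  rw [hdd] at hIm
  have hRim : ∀ r : ℝ, (-2 * (Real.pi : ℂ) * Complex.I * ((A : ℂ) + (B : ℂ) * Complex.I) *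
        (r : ℂ) - (Γ n : ℂ) - (Γ m : ℂ)).im
      = -2 * Real.pi * A * r := by
    intro r
    simp only [Complex.sub_im, Complex.mul_im, Complex.mul_re, Complex.add_re, Complex.add_im,
      Complex.ofReal_re, Complex.ofReal_im, Complex.I_re, Complex.I_im, Complex.neg_re,
      Complex.neg_im, Complex.re_ofNat, Complex.im_ofNat]
    ring
  rw [hRim (‖d‖ ^ 2)] at hIm
  -- pointwise computation of the imaginary parts in the sum
  have hpt : ∀ l ∈ (Finset.univ.erase m).erase n,
      (conj d * ((Γ l : ℂ) / (conj (k m) - conj (k l)))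
        - conj d * ((Γ l : ℂ) / (conj (k n) - conj (k l)))).im
      = (-2) * (Γ l * ((1 / 2) * (conj (k n - k m) * (k l - k m)).im) *
          (1 / ‖k n - k l‖ ^ 2 - 1 / ‖k l - k m‖ ^ 2)) := by
    intro l hl
    have hln : l ≠ n := (Finset.mem_erase.mp hl).1
    have hlm : l ≠ m := (Finset.mem_erase.mp (Finset.mem_erase.mp hl).2).1
    have hu : k m - k l ≠ 0 := sub_ne_zero.mpr (hk m l (Ne.symm hlm))
    have hv : k n - k l ≠ 0 := sub_ne_zero.mpr (hk n l (Ne.symm hln))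
    have e1 : conj d * ((Γ l : ℂ) / (conj (k m) - conj (k l)))
        - conj d * ((Γ l : ℂ) / (conj (k n) - conj (k l)))
        = (Γ l : ℂ) * ((conj (k m - k l) - conj (k n - k l)) *
            (1 / conj (k m - k l) - 1 / conj (k n - k l))) := by
      simp only [hd_def, map_sub]
      ring
    rw [e1]
    rw [show ((Γ l : ℂ) * ((conj (k m - k l) - conj (k n - k l)) *
        (1 / conj (k m - k l) - 1 / conj (k n - k l)))).im
        = Γ l * ((conj (k m - k l) - conj (k n - k l)) *
        (1 / conj (k m - k l) - 1 / conj (k n - k l))).im by simp [Complex.mul_im]]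
    rw [key_im (k m - k l) (k n - k l) hu hv]
    rw [show k n - k l - (k m - k l) = k n - k m by ring,
      show (0 : ℂ) - (k m - k l) = k l - k m by ring,
      norm_sub_rev (k m) (k l)]
    ring
  rw [Finset.sum_congr rfl hpt] at hIm
  rw [← Finset.mul_sum] at hIm
  -- conclude
  have hdpos : ‖d‖ ≠ 0 := norm_ne_zero_iff.mpr hd
  have hπd : Real.pi * ‖d‖ ^ 2 ≠ 0 :=
    mul_ne_zero Real.pi_ne_zero (pow_ne_zero 2 hdpos)
  have hSum : ∑ l ∈ (Finset.univ.erase m).erase n,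
      Γ l * ((1 / 2) * (conj (k n - k m) * (k l - k m)).im) *
        (1 / ‖k n - k l‖ ^ 2 - 1 / ‖k l - k m‖ ^ 2)
      = Real.pi * A * ‖d‖ ^ 2 := by linarith
  rw [hSum]
  field_simp
end

section
/- Let N ≥ 2, let Γ : Fin N → ℝ, and let k : Fin N → ℂ be pairwise distinct and nonzero points such that for every m, (i/(2π k_m)) ∑_{n≠m} Γ_n / (conj(k_m) − conj(k_n)) = A + iB with A, B ∈ ℝ. Then for every pair of distinct indices m ≠ n, B = (1/(2π |k_m − k_n|²)) · [ Γ_m + Γ_n + Re( (k_m − k_n) · conj( ∑_{l≠m, l≠n} Γ_l ( (k_l − k_n)/|k_n − k_l|² − (k_l − k_m)/|k_l − k_m|² ) ) ) ], where Re(u · conj(v)) is the Euclidean inner product of u, v ∈ ℂ ≅ ℝ². -/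
open Finset ComplexConjugate

/-- Formula for the imaginary part `B` of the self-similar constant: for any pair
`m ≠ n`, `B = (1/(2π |k_m-k_n|²)) [Γ_m + Γ_n + (k_m - k_n) ⬝ ∑_{l≠m,n} Γ_l
((k_l-k_n)/|k_n-k_l|² - (k_l-k_m)/|k_l-k_m|²)]`, the dot product of `u, v ∈ ℂ ≅ ℝ²`
being `Re(u conj v)`. -/
theorem self_similar_B_formula (N : ℕ) (hN : 2 ≤ N) (Γ : Fin N → ℝ) (k : Fin N → ℂ)
    (hk : ∀ m n : Fin N, m ≠ n → k m ≠ k n) (hk0 : ∀ m, k m ≠ 0)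
    (A B : ℝ)
    (hss : ∀ m : Fin N,
      Complex.I / (2 * (Real.pi : ℂ) * k m) *
          ∑ n ∈ Finset.univ.erase m, (Γ n : ℂ) / (conj (k m) - conj (k n))
        = (A : ℂ) + (B : ℂ) * Complex.I) :
    ∀ m n : Fin N, m ≠ n →
      B = 1 / (2 * Real.pi * ‖k m - k n‖ ^ 2) *
        (Γ m + Γ n +
          ((k m - k n) * conj (∑ l ∈ (Finset.univ.erase m).erase n,
            (Γ l : ℂ) * ((k l - k n) / ((‖k n - k l‖ ^ 2 : ℝ) : ℂ)
              - (k l - k m) / ((‖k l - k m‖ ^ 2 : ℝ) : ℂ)))).re) := by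
  have hπ : (Real.pi : ℝ) ≠ 0 := Real.pi_ne_zero
  have hπC : (Real.pi : ℂ) ≠ 0 := Complex.ofReal_ne_zero.2 hπ
  -- Step A: conjugated self-similarity
  have hT : ∀ j : Fin N, ∑ l ∈ Finset.univ.erase j, (Γ l : ℂ) / (k j - k l)
      = 2 * Real.pi * conj (k j) * ((B : ℂ) + (A : ℂ) * Complex.I) := by
    intro j
    have h := hss j
    have hkj := hk0 j
    have hS : ∑ l ∈ Finset.univ.erase j, (Γ l : ℂ) / (conj (k j) - conj (k l))
        = -Complex.I * (((A : ℂ) + (B : ℂ) * Complex.I) * (2 * Real.pi * k j)) := by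
      have h2k : 2 * (Real.pi : ℂ) * k j ≠ 0 := by
        simp [hπC, hkj]
      rw [div_mul_eq_mul_div, div_eq_iff h2k] at h
      rw [← Complex.inv_I, ← h, ← mul_assoc, inv_mul_cancel₀ Complex.I_ne_zero, one_mul]
    have h2 := congrArg (starRingEnd ℂ) hS
    simp only [map_sum, map_div₀, map_mul, map_add, map_neg, map_ofNat, map_sub,
      Complex.conj_ofReal, Complex.conj_conj, Complex.conj_I] at h2
    linear_combination h2 - 2*(Real.pi:ℂ)*(starRingEnd ℂ) (k j)*(B:ℂ)*Complex.I_sq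
  intro m n hmn
  have hd : k m - k n ≠ 0 := sub_ne_zero.2 (hk m n hmn)
  have hnm : n ∈ Finset.univ.erase m := Finset.mem_erase.2 ⟨Ne.symm hmn, Finset.mem_univ n⟩
  have hmn' : m ∈ Finset.univ.erase n := Finset.mem_erase.2 ⟨hmn, Finset.mem_univ m⟩
  have hEE : (Finset.univ.erase n).erase m = (Finset.univ.erase m).erase n := by
    ext x; simp only [Finset.mem_erase]; tauto
  have hdd : (k m - k n) * (conj (k m) - conj (k n))
      = ((‖k m - k n‖ ^ 2 : ℝ) : ℂ) := by
    rw [← map_sub]; push_cast [Complex.sq_norm]; exact Complex.mul_conj _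
  -- conjugate of the target sum
  have h2 : conj (∑ l ∈ (Finset.univ.erase m).erase n,
        (Γ l : ℂ) * ((k l - k n) / ((‖k n - k l‖ ^ 2 : ℝ) : ℂ)
          - (k l - k m) / ((‖k l - k m‖ ^ 2 : ℝ) : ℂ)))
      = ∑ l ∈ (Finset.univ.erase m).erase n,
        ((Γ l : ℂ) / (k m - k l) - (Γ l : ℂ) / (k n - k l)) := by
    rw [map_sum]
    refine Finset.sum_congr rfl fun l hl => ?_
    have hln : l ≠ n := (Finset.mem_erase.1 hl).1
    have hlm : l ≠ m := (Finset.mem_erase.1 (Finset.mem_erase.1 hl).2).1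
    have h1 : k n - k l ≠ 0 := sub_ne_zero.2 (hk n l (Ne.symm hln))
    have h2 : k l - k m ≠ 0 := sub_ne_zero.2 (hk l m hlm)
    have h3 : k m - k l ≠ 0 := sub_ne_zero.2 (hk m l (Ne.symm hlm))
    have h4 : conj (k n) - conj (k l) ≠ 0 :=
      sub_ne_zero.2 ((starRingEnd ℂ).injective.ne (sub_ne_zero.1 h1))
    have h5 : conj (k l) - conj (k m) ≠ 0 :=
      sub_ne_zero.2 ((starRingEnd ℂ).injective.ne (sub_ne_zero.1 h2))
    have e1 : ((‖k n - k l‖ ^ 2 : ℝ) : ℂ) = (k n - k l) * conj (k n - k l) := by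
      push_cast [Complex.sq_norm]; exact (Complex.mul_conj _).symm
    have e2 : ((‖k l - k m‖ ^ 2 : ℝ) : ℂ) = (k l - k m) * conj (k l - k m) := by
      push_cast [Complex.sq_norm]; exact (Complex.mul_conj _).symm
    rw [map_mul, map_sub, map_div₀, map_div₀, Complex.conj_ofReal, Complex.conj_ofReal,
      Complex.conj_ofReal, e1, e2]
    simp only [map_sub]
    field_simp [h1, h2, h3, h4, h5]
    ring
  -- splitting of the two sums
  have h3 : (∑ l ∈ Finset.univ.erase m, (Γ l : ℂ) / (k m - k l))
        - (∑ l ∈ Finset.univ.erase n, (Γ l : ℂ) / (k n - k l))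
      = ((Γ n : ℂ) / (k m - k n) - (Γ m : ℂ) / (k n - k m))
        + ∑ l ∈ (Finset.univ.erase m).erase n,
            ((Γ l : ℂ) / (k m - k l) - (Γ l : ℂ) / (k n - k l)) := by
    rw [← Finset.add_sum_erase _ (fun l => (Γ l : ℂ) / (k m - k l)) hnm,
      ← Finset.add_sum_erase _ (fun l => (Γ l : ℂ) / (k n - k l)) hmn',
      hEE, Finset.sum_sub_distrib]
    ring
  have h4 : (k m - k n) * ((Γ n : ℂ) / (k m - k n) - (Γ m : ℂ) / (k n - k m))
      = (Γ n : ℂ) + (Γ m : ℂ) := by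
    have hd2 : k n - k m ≠ 0 := sub_ne_zero.2 (hk n m (Ne.symm hmn))
    field_simp [hd, hd2]
    ring
  have key : ((2 * Real.pi * ‖k m - k n‖ ^ 2 * B : ℝ) : ℂ)
      + ((2 * Real.pi * ‖k m - k n‖ ^ 2 * A : ℝ) : ℂ) * Complex.I
      = ((Γ m : ℝ) : ℂ) + ((Γ n : ℝ) : ℂ)
        + (k m - k n) * conj (∑ l ∈ (Finset.univ.erase m).erase n,
            (Γ l : ℂ) * ((k l - k n) / ((‖k n - k l‖ ^ 2 : ℝ) : ℂ)
              - (k l - k m) / ((‖k l - k m‖ ^ 2 : ℝ) : ℂ))) := by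
    push_cast
    push_cast at h2 hdd
    linear_combination (-(2*(Real.pi:ℂ)*((B:ℂ)+(A:ℂ)*Complex.I))) * hdd
      + (-(k m - k n)) * hT m + (k m - k n) * hT n + (k m - k n) * h3 + h4
      + (-(k m - k n)) * h2
  have hre := congrArg Complex.re key
  simp only [Complex.add_re, Complex.ofReal_re, Complex.re_ofReal_mul, Complex.I_re,
    mul_zero, add_zero] at hre
  have hc : 2 * Real.pi * ‖k m - k n‖ ^ 2 ≠ 0 := by
    have h0 : ‖k m - k n‖ ≠ 0 := norm_ne_zero_iff.mpr hd
    positivity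
  rw [← hre]
  field_simp
end

section
/- Let N ≥ 2, let Γ : Fin N → ℝ, and let k : Fin N → ℂ be pairwise distinct and nonzero points such that for every m, (i/(2π k_m)) ∑_{n≠m} Γ_n / (conj(k_m) − conj(k_n)) = C for a fixed C ∈ ℂ. Then C · (∑_m Γ_m |k_m|²) = (i/(2π)) · ∑_{m<n} Γ_m Γ_n. Consequently, if Re(C) ≠ 0 then both the angular impulse I = ∑_m Γ_m |k_m|² and the quantity Γ_H = ∑_{m<n} Γ_m Γ_n vanish; i.e., self-similar collapsing (or expanding) configurations necessarily satisfy I = 0 and Γ_H = 0. -/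
open Finset ComplexConjugate

/-- For a self-similar configuration with constant `C`,
`C ⋅ (∑ Γ_m |k_m|²) = (i/(2π)) ∑_{m<n} Γ_m Γ_n`; consequently, if `Re C ≠ 0` then both
the angular impulse `I = ∑ Γ_m |k_m|²` and `Γ_H = ∑_{m<n} Γ_m Γ_n` vanish. -/
theorem self_similar_necessary_conditions (N : ℕ) (hN : 2 ≤ N) (Γ : Fin N → ℝ)
    (k : Fin N → ℂ)
    (hk : ∀ m n : Fin N, m ≠ n → k m ≠ k n) (hk0 : ∀ m, k m ≠ 0)
    (C : ℂ)
    (hss : ∀ m : Fin N,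
      Complex.I / (2 * (Real.pi : ℂ) * k m) *
          ∑ n ∈ Finset.univ.erase m, (Γ n : ℂ) / (conj (k m) - conj (k n))
        = C) :
    C * ((∑ m, Γ m * ‖k m‖ ^ 2 : ℝ) : ℂ)
        = Complex.I / (2 * (Real.pi : ℂ)) *
          ((∑ m, ∑ n ∈ Finset.univ.filter (fun n => m < n), Γ m * Γ n : ℝ) : ℂ)
    ∧ (C.re ≠ 0 →
        (∑ m, Γ m * ‖k m‖ ^ 2) = 0
        ∧ (∑ m, ∑ n ∈ Finset.univ.filter (fun n => m < n), Γ m * Γ n) = 0) := by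
  have hπ : (Real.pi : ℂ) ≠ 0 := by exact_mod_cast Real.pi_ne_zero
  have h2π : (2 * (Real.pi : ℂ)) ≠ 0 := by simp [hπ]
  set G : ℝ := ∑ m, ∑ n ∈ Finset.univ.filter (fun n => m < n), Γ m * Γ n with hG
  set IR : ℝ := ∑ m, Γ m * ‖k m‖ ^ 2 with hIR
  set g : Fin N → Fin N → ℂ :=
    fun m n => (Γ m : ℂ) * (Γ n : ℂ) * (conj (k m) / (conj (k m) - conj (k n))) with hg
  -- Step 1: per-vortex identity after clearing denominators
  have h1 : ∀ m : Fin N,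
      Complex.I * ((Γ m : ℂ) * conj (k m) *
        ∑ n ∈ Finset.univ.erase m, (Γ n : ℂ) / (conj (k m) - conj (k n)))
      = C * (2 * (Real.pi : ℂ)) * ((Γ m : ℂ) * (k m * conj (k m))) := by
    intro m
    have h := hss m
    rw [div_mul_eq_mul_div, div_eq_iff (by simp [hπ, hk0 m])] at h
    linear_combination (Γ m : ℂ) * conj (k m) * h
  -- sum over m
  have h2 : ∑ m, Complex.I * ((Γ m : ℂ) * conj (k m) *
        ∑ n ∈ Finset.univ.erase m, (Γ n : ℂ) / (conj (k m) - conj (k n)))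
      = ∑ m, C * (2 * (Real.pi : ℂ)) * ((Γ m : ℂ) * (k m * conj (k m))) :=
    Finset.sum_congr rfl fun m _ => h1 m
  -- RHS is C * 2π * IR
  have hrhs : ∑ m, C * (2 * (Real.pi : ℂ)) * ((Γ m : ℂ) * (k m * conj (k m)))
      = C * (2 * (Real.pi : ℂ)) * (IR : ℂ) := by
    rw [← Finset.mul_sum, hIR]
    push_cast
    congr 1
    refine Finset.sum_congr rfl fun m _ => ?_
    rw [Complex.mul_conj]
    rw [← Complex.sq_norm]
    push_cast
    ring
  -- LHS is I * T where T is the double sum of g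
  have hlhs : ∑ m, Complex.I * ((Γ m : ℂ) * conj (k m) *
        ∑ n ∈ Finset.univ.erase m, (Γ n : ℂ) / (conj (k m) - conj (k n)))
      = Complex.I * ∑ m, ∑ n ∈ Finset.univ.erase m, g m n := by
    rw [Finset.mul_sum]
    refine Finset.sum_congr rfl fun m _ => ?_
    have : (Γ m : ℂ) * conj (k m) *
        ∑ n ∈ Finset.univ.erase m, (Γ n : ℂ) / (conj (k m) - conj (k n))
        = ∑ n ∈ Finset.univ.erase m, g m n := by
      rw [Finset.mul_sum]
      refine Finset.sum_congr rfl fun n _ => ?_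
      simp only [hg]
      ring
    rw [this]
  -- combinatorics: T = G
  have split : ∀ m : Fin N, Finset.univ.erase m
      = (Finset.univ.filter (fun n => m < n)) ∪ (Finset.univ.filter (fun n => n < m)) := by
    intro m
    ext n
    simp only [Finset.mem_erase, Finset.mem_union, Finset.mem_filter, Finset.mem_univ,
      true_and, and_true, Fin.lt_def, Ne, Fin.ext_iff]
    omega
  have hdisj : ∀ m : Fin N,
      Disjoint (Finset.univ.filter (fun n => m < n)) (Finset.univ.filter (fun n => n < m)) := by
    intro m
    simp only [Finset.disjoint_left, Finset.mem_filter, Finset.mem_univ, true_and]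
    intro n h1 h2
    exact absurd (h1.trans h2) (lt_irrefl m)
  have hT : ∑ m, ∑ n ∈ Finset.univ.erase m, g m n = (G : ℂ) := by
    have step : ∀ m : Fin N, ∑ n ∈ Finset.univ.erase m, g m n
        = ∑ n ∈ Finset.univ.filter (fun n => m < n), g m n
          + ∑ n ∈ Finset.univ.filter (fun n => n < m), g m n := by
      intro m
      rw [split m, Finset.sum_union (hdisj m)]
    rw [Finset.sum_congr rfl fun m _ => step m, Finset.sum_add_distrib]
    have hswap : ∑ m, ∑ n ∈ Finset.univ.filter (fun n => n < m), g m n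
        = ∑ n, ∑ m ∈ Finset.univ.filter (fun m => n < m), g m n := by
      refine Finset.sum_comm' fun x y => ?_
      simp
    rw [hswap, ← Finset.sum_add_distrib]
    have := fun m : Fin N => (Finset.sum_add_distrib
      (s := Finset.univ.filter (fun n => m < n)) (f := fun n => g m n)
      (g := fun n => g n m)).symm
    rw [Finset.sum_congr rfl fun m _ => this m]
    rw [hG]
    push_cast
    refine Finset.sum_congr rfl fun m _ => Finset.sum_congr rfl fun n hn => ?_
    have hmn : m ≠ n := by
      simp only [Finset.mem_filter] at hn
      exact ne_of_lt hn.2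
    have hkk : conj (k m) - conj (k n) ≠ 0 := by
      rw [sub_ne_zero]
      exact fun h => hk m n hmn ((starRingEnd ℂ).injective h)
    have hkk' : conj (k n) - conj (k m) ≠ 0 := by
      rw [sub_ne_zero]
      exact fun h => hk n m (Ne.symm hmn) ((starRingEnd ℂ).injective h)
    simp only [hg]
    field_simp
    ring
  -- main identity
  have key : C * (2 * (Real.pi : ℂ)) * (IR : ℂ) = Complex.I * (G : ℂ) := by
    rw [← hrhs, ← h2, hlhs, hT]
  have goal1 : C * (IR : ℂ) = Complex.I / (2 * (Real.pi : ℂ)) * (G : ℂ) := by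
    field_simp
    linear_combination key
  refine ⟨goal1, fun hre => ?_⟩
  have hrw : Complex.I / (2 * (Real.pi : ℂ)) * (G : ℂ)
      = Complex.I * ((G / (2 * Real.pi) : ℝ) : ℂ) := by
    push_cast
    ring
  have hre0 : C.re * IR = 0 := by
    have := congrArg Complex.re goal1
    rw [hrw] at this
    simpa [Complex.mul_re, Complex.div_im] using this
  have hIR0 : IR = 0 := by
    rcases mul_eq_zero.mp hre0 with h | h
    · exact absurd h hre
    · exact h
  have hG0 : G = 0 := by
    have h0 : Complex.I / (2 * (Real.pi : ℂ)) * (G : ℂ) = 0 := by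
      rw [← goal1, hIR0]
      simp
    rcases mul_eq_zero.mp h0 with h | h
    · exact absurd h (div_ne_zero Complex.I_ne_zero h2π)
    · exact_mod_cast h
  exact ⟨hIR0, hG0⟩
end

section
/- Let N ≥ 2, let Γ : Fin N → ℝ, and let k : Fin N → ℂ be pairwise distinct and nonzero points such that for every m, (i/(2π k_m)) ∑_{n≠m} Γ_n / (conj(k_m) − conj(k_n)) = C for a fixed C ∈ ℂ with C ≠ 0. Then the linear momentum vanishes: ∑_m Γ_m k_m = 0; i.e., any genuinely self-similar (non-fixed) configuration has its center of vorticity at the origin. -/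
open Finset ComplexConjugate

/-! Weight the `m`-th self-similarity equation by `Γ_m` and sum over `m`. On the left the
interaction terms cancel in pairs, since `1 / (conj k_m - conj k_n)` is antisymmetric in `(m, n)`;
on the right stands a nonzero multiple of the momentum `∑ Γ_m k_m`. -/

theorem Finset.sum_sum_erase_eq_zero_of_antisymm {ι M : Type*} [DecidableEq ι] [AddCommGroup M]
    (s : Finset ι) (f : ι → ι → M) (hf : ∀ m n, f m n = -f n m) :
    ∑ m ∈ s, ∑ n ∈ s.erase m, f m n = 0 := by
  rw [← sum_finset_product' s.offDiag s (fun m => s.erase m) (fun p => by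
    simp only [mem_offDiag, mem_erase]; grind)]
  refine sum_involution (fun p _ => p.swap) (fun p _ => by simp [hf p.1 p.2])
    (fun p hp _ h => (mem_offDiag.mp hp).2.2 (congrArg Prod.snd h))
    (fun p hp => mem_offDiag.mpr ?_) (fun p _ => p.swap_swap)
  obtain ⟨hp₁, hp₂, hne⟩ := mem_offDiag.mp hp
  exact ⟨hp₂, hp₁, hne.symm⟩

theorem Finset.sum_mul_sum_erase_div_sub_eq_zero {ι K : Type*} [DecidableEq ι] [Field K]
    (s : Finset ι) (w z : ι → K) :
    ∑ m ∈ s, w m * ∑ n ∈ s.erase m, w n / (z m - z n) = 0 := by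
  simp_rw [mul_sum]
  refine s.sum_sum_erase_eq_zero_of_antisymm _ fun m n => ?_
  rw [← neg_sub (z m), div_neg]
  ring

theorem self_similar_momentum_vanishes_general (N : ℕ) (Γ : Fin N → ℝ)
    (k : Fin N → ℂ)
    (C : ℂ) (hC : C ≠ 0)
    (hss : ∀ m : Fin N,
      Complex.I / (2 * (Real.pi : ℂ) * k m) *
          ∑ n ∈ Finset.univ.erase m, (Γ n : ℂ) / (conj (k m) - conj (k n))
        = C) :
    ∑ m, (Γ m : ℂ) * k m = 0 := by
  have hsum (m : Fin N) :
      ∑ n ∈ univ.erase m, (Γ n : ℂ) / (conj (k m) - conj (k n))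
        = C * (2 * Real.pi * k m / Complex.I) := by
    have hprefactor := left_ne_zero_of_mul ((hss m).symm ▸ hC)
    rw [← inv_div, ← hss m, mul_comm, inv_mul_cancel_left₀ hprefactor]
  have hfactor : C * (2 * Real.pi / Complex.I) ≠ 0 := by
    have hpi : (Real.pi : ℂ) ≠ 0 := by exact_mod_cast Real.pi_ne_zero
    simp [hC, hpi, Complex.I_ne_zero]
  refine (mul_eq_zero.mp ?_).resolve_left hfactor
  rw [← univ.sum_mul_sum_erase_div_sub_eq_zero (fun m => (Γ m : ℂ)) (fun m => conj (k m)), mul_sum]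
  exact sum_congr rfl fun m _ => by rw [hsum]; ring

/-- For a self-similar configuration with constant `C ≠ 0`, the linear momentum
vanishes: `∑ Γ_m k_m = 0`, i.e. the center of vorticity is at the origin. -/
theorem self_similar_momentum_vanishes (N : ℕ) (hN : 2 ≤ N) (Γ : Fin N → ℝ)
    (k : Fin N → ℂ)
    (hk : ∀ m n : Fin N, m ≠ n → k m ≠ k n) (hk0 : ∀ m, k m ≠ 0)
    (C : ℂ) (hC : C ≠ 0)
    (hss : ∀ m : Fin N,
      Complex.I / (2 * (Real.pi : ℂ) * k m) *
          ∑ n ∈ Finset.univ.erase m, (Γ n : ℂ) / (conj (k m) - conj (k n))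
        = C) :
    ∑ m, (Γ m : ℂ) * k m = 0 :=
  self_similar_momentum_vanishes_general N Γ k C hC hss
end

section
/- Let Γ_1, Γ_2 > 0 and Γ_3 = −Γ_1Γ_2/(Γ_1 + Γ_2), and let x_1, x_2, x, y ∈ ℝ. Then the collapse condition M = Γ_1Γ_2 (x_1 − x_2)² + Γ_2Γ_3 ((x_2 − x)² + y²) + Γ_3Γ_1 ((x − x_1)² + y²) = 0 holds if and only if (x − (Γ_1 x_1 + Γ_2 x_2)/(Γ_1 + Γ_2))² + y² = ((Γ_1² + Γ_1Γ_2 + Γ_2²)/(Γ_1 + Γ_2)²) · (x_1 − x_2)². That is, for three vortices with the first two at real positions x_1, x_2, the third vortex position x + iy satisfying M = 0 lies on an explicit circle. -/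
/-- For three vortices with `Γ_1, Γ_2 > 0`, `Γ_3 = -Γ_1Γ_2/(Γ_1+Γ_2)`, the first two at
real positions `x_1, x_2` and the third at `x + iy`, the collapse condition `M = 0`
holds iff `(x + iy)` lies on the circle of center `(Γ_1x_1+Γ_2x_2)/(Γ_1+Γ_2)` and
squared radius `((Γ_1²+Γ_1Γ_2+Γ_2²)/(Γ_1+Γ_2)²)(x_1-x_2)²`. -/
theorem three_vortex_collapse_circle (Γ₁ Γ₂ : ℝ) (h1 : 0 < Γ₁) (h2 : 0 < Γ₂)
    (Γ₃ : ℝ) (h3 : Γ₃ = -Γ₁ * Γ₂ / (Γ₁ + Γ₂)) (x₁ x₂ x y : ℝ) :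
    Γ₁ * Γ₂ * (x₁ - x₂) ^ 2 + Γ₂ * Γ₃ * ((x₂ - x) ^ 2 + y ^ 2)
        + Γ₃ * Γ₁ * ((x - x₁) ^ 2 + y ^ 2) = 0
      ↔ (x - (Γ₁ * x₁ + Γ₂ * x₂) / (Γ₁ + Γ₂)) ^ 2 + y ^ 2
        = ((Γ₁ ^ 2 + Γ₁ * Γ₂ + Γ₂ ^ 2) / (Γ₁ + Γ₂) ^ 2) * (x₁ - x₂) ^ 2 := by
  have hs : Γ₁ + Γ₂ ≠ 0 := by positivity
  have hg : Γ₁ * Γ₂ ≠ 0 := by positivity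
  subst h3
  constructor <;> intro h <;> field_simp at h ⊢
  · nlinarith [sq_nonneg (Γ₁+Γ₂), mul_pos h1 h2, sq_nonneg y]
  · nlinarith [sq_nonneg (Γ₁+Γ₂), mul_pos h1 h2, sq_nonneg y]
end

section
/- Let Γ_1, Γ_2 > 0, Γ_3 = −Γ_1Γ_2/(Γ_1 + Γ_2), R = Γ_1² + Γ_1Γ_2 + Γ_2², and θ ∈ ℝ. Define k_1 = (Γ_1Γ_2/(Γ_1 + Γ_2)²)(1 + (√R/Γ_1) e^{−iθ}), k_2 = (Γ_1Γ_2/(Γ_1 + Γ_2)²)(1 − (√R/Γ_2) e^{−iθ}), k_3 = 1. Then: (i) Γ_1 k_1 + Γ_2 k_2 + Γ_3 k_3 = 0; (ii) |k_1 − k_2| = √R/(Γ_1 + Γ_2); (iii) |k_2 − k_3| = (√R/(Γ_1 + Γ_2)²) · √(Γ_1² + R + 2Γ_1√R cos θ); (iv) |k_3 − k_1| = (√R/(Γ_1 + Γ_2)²) · √(Γ_2² + R − 2Γ_2√R cos θ). -/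
/-!
With `s = √R`, every pairwise difference of the configuration is a real multiple of
`s + c e^{-iθ}` for a real `c`: the constant term `Γ₁Γ₂/(Γ₁+Γ₂)² - 1` equals `-s²/(Γ₁+Γ₂)²`
precisely because `s² = Γ₁² + Γ₁Γ₂ + Γ₂²`. The distances then follow from the law of cosines
`|a + b e^{-iθ}|² = a² + b² + 2ab cos θ`.
-/

open Complex

section CollapseFamily

variable {K : Type*} [Field K] {a b : K}

theorem collapse_momentum_eq_zero (s e : K) (ha : a ≠ 0) (hb : b ≠ 0) (hab : a + b ≠ 0) :
    a * (a * b / (a + b) ^ 2 * (1 + s / a * e)) + b * (a * b / (a + b) ^ 2 * (1 - s / b * e))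
      + -a * b / (a + b) = 0 := by
  field_simp
  ring

theorem collapse_sub_collapse (s e : K) (ha : a ≠ 0) (hb : b ≠ 0) (hab : a + b ≠ 0) :
    a * b / (a + b) ^ 2 * (1 + s / a * e) - a * b / (a + b) ^ 2 * (1 - s / b * e)
      = s / (a + b) * e := by
  field_simp
  ring

theorem collapse_sub_one {s : K} (e : K) (hs : s ^ 2 = a ^ 2 + a * b + b ^ 2) (hb : b ≠ 0)
    (hab : a + b ≠ 0) :
    a * b / (a + b) ^ 2 * (1 - s / b * e) - 1 = -(s / (a + b) ^ 2) * (s + a * e) := by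
  field_simp
  linear_combination hs

theorem one_sub_collapse {s : K} (e : K) (hs : s ^ 2 = a ^ 2 + a * b + b ^ 2) (ha : a ≠ 0)
    (hab : a + b ≠ 0) :
    1 - a * b / (a + b) ^ 2 * (1 + s / a * e) = s / (a + b) ^ 2 * (s + -b * e) := by
  field_simp
  linear_combination -hs

end CollapseFamily

theorem Complex.norm_ofReal_add_mul_exp_neg_mul_I (a b θ : ℝ) :
    ‖(a : ℂ) + b * exp (-(θ : ℂ) * I)‖ = √(a ^ 2 + b ^ 2 + 2 * a * b * Real.cos θ) := by
  rw [norm_def, normSq_apply, ← ofReal_neg]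
  congr 1
  simp only [add_re, add_im, ofReal_re, ofReal_im, re_ofReal_mul, im_ofReal_mul,
    exp_ofReal_mul_I_re, exp_ofReal_mul_I_im, Real.cos_neg, Real.sin_neg]
  linear_combination b ^ 2 * Real.sin_sq_add_cos_sq θ

/-- Properties of the one-parameter family of three-vortex collapse configurations:
vanishing linear momentum and the explicit mutual distances. -/
theorem three_vortex_family (Γ₁ Γ₂ : ℝ) (h1 : 0 < Γ₁) (h2 : 0 < Γ₂) (Γ₃ R : ℝ)
    (h3 : Γ₃ = -Γ₁ * Γ₂ / (Γ₁ + Γ₂)) (hR : R = Γ₁ ^ 2 + Γ₁ * Γ₂ + Γ₂ ^ 2) (θ : ℝ)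
    (k₁ k₂ k₃ : ℂ)
    (hk1 : k₁ = ((Γ₁ * Γ₂ / (Γ₁ + Γ₂) ^ 2 : ℝ) : ℂ) *
      (1 + ((Real.sqrt R / Γ₁ : ℝ) : ℂ) * Complex.exp (-(θ : ℂ) * Complex.I)))
    (hk2 : k₂ = ((Γ₁ * Γ₂ / (Γ₁ + Γ₂) ^ 2 : ℝ) : ℂ) *
      (1 - ((Real.sqrt R / Γ₂ : ℝ) : ℂ) * Complex.exp (-(θ : ℂ) * Complex.I)))
    (hk3 : k₃ = 1) :
    (Γ₁ : ℂ) * k₁ + (Γ₂ : ℂ) * k₂ + (Γ₃ : ℂ) * k₃ = 0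
    ∧ ‖k₁ - k₂‖ = Real.sqrt R / (Γ₁ + Γ₂)
    ∧ ‖k₂ - k₃‖ = Real.sqrt R / (Γ₁ + Γ₂) ^ 2 *
        Real.sqrt (Γ₁ ^ 2 + R + 2 * Γ₁ * Real.sqrt R * Real.cos θ)
    ∧ ‖k₃ - k₁‖ = Real.sqrt R / (Γ₁ + Γ₂) ^ 2 *
        Real.sqrt (Γ₂ ^ 2 + R - 2 * Γ₂ * Real.sqrt R * Real.cos θ) := by
  subst hk1 hk2 hk3 h3
  have hΓ : 0 < Γ₁ + Γ₂ := add_pos h1 h2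
  have h1C : (Γ₁ : ℂ) ≠ 0 := ofReal_ne_zero.mpr h1.ne'
  have h2C : (Γ₂ : ℂ) ≠ 0 := ofReal_ne_zero.mpr h2.ne'
  have hΓC : (Γ₁ : ℂ) + Γ₂ ≠ 0 := mod_cast hΓ.ne'
  have hR₀ : 0 ≤ R := hR ▸ by positivity
  have hs : (√R : ℂ) ^ 2 = Γ₁ ^ 2 + Γ₁ * Γ₂ + Γ₂ ^ 2 := by
    rw [← ofReal_pow, Real.sq_sqrt hR₀, hR]; push_cast; ring
  have hc : 0 ≤ √R / (Γ₁ + Γ₂) ^ 2 := by positivity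
  refine ⟨?_, ?_, ?_, ?_⟩
  · push_cast
    simpa using collapse_momentum_eq_zero _ _ h1C h2C hΓC
  · push_cast
    rw [collapse_sub_collapse _ _ h1C h2C hΓC, norm_mul, ← ofReal_add, ← ofReal_div,
      Complex.norm_of_nonneg (by positivity), ← ofReal_neg, norm_exp_ofReal_mul_I, mul_one]
  · push_cast
    rw [collapse_sub_one _ hs h2C hΓC, norm_mul, norm_neg, ← ofReal_add, ← ofReal_pow,
      ← ofReal_div, Complex.norm_of_nonneg hc, norm_ofReal_add_mul_exp_neg_mul_I,
      Real.sq_sqrt hR₀]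
    ring_nf
  · push_cast
    rw [one_sub_collapse _ hs h1C hΓC, norm_mul, ← ofReal_add, ← ofReal_pow, ← ofReal_div,
      Complex.norm_of_nonneg hc, ← ofReal_neg, norm_ofReal_add_mul_exp_neg_mul_I,
      Real.sq_sqrt hR₀]
    ring_nf
end

section
/- Let Γ_1 = Γ_2 = 1, Γ_3 = −1/2, and for θ ∈ [0, π/2] define k_1 = (1 + √3 e^{−iθ})/4, k_2 = (1 − √3 e^{−iθ})/4, k_3 = 1. Then k_1, k_2, k_3 are pairwise distinct and nonzero, and for every m ∈ {1, 2, 3}, (i/(2π k_m)) ∑_{n≠m} Γ_n / (conj(k_m) − conj(k_n)) = A(θ) + iB(θ), where A(θ) = −2 sin 2θ / (π(5 − 3 cos 2θ)) and B(θ) = 2(3 − cos 2θ) / (π(5 − 3 cos 2θ)). In particular, the configuration is self-similar collapsing for 0 < θ < π/2 and is a relative equilibrium for θ = 0 and θ = π/2. -/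
/-!
Write `u = √3 e^{-iθ}`, so that `k = ((1 + u)/4, (1 - u)/4, 1)`. Since `|u|² = 3`, we have
`conj u = 3/u`, so every conjugate `conj k_n` is a rational function of `u`, and for each `m` the
self-similarity ratio simplifies to `4i / (π(3 - conj u²/3)) = 4i / (π(3 - e^{2iθ}))`.
Its real and imaginary parts are `A(θ)` and `B(θ)`, because `|3 - e^{2iθ}|² = 2(5 - 3 cos 2θ)`.
-/

open Finset ComplexConjugate Complex

noncomputable def selfSimilarityRatio {ι : Type*} [Fintype ι] [DecidableEq ι] (Γ : ι → ℝ)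
    (k : ι → ℂ) (m : ι) : ℂ :=
  I / (2 * (Real.pi : ℂ) * k m) * ∑ n ∈ univ.erase m, (Γ n : ℂ) / (conj (k m) - conj (k n))

noncomputable def threeVortexStrengths : Fin 3 → ℝ := ![1, 1, -(1 / 2)]

noncomputable def threeVortexPoints (u : ℂ) : Fin 3 → ℂ := ![(1 + u) / 4, (1 - u) / 4, 1]

lemma ne_ofReal_of_normSq_eq {u : ℂ} {r c : ℝ} (hu : normSq u = r) (hc : c ^ 2 ≠ r) :
    u ≠ c := by
  rintro rfl
  exact hc (by rw [← hu, normSq_ofReal, sq])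

section normSq_eq_three

variable {u : ℂ} (hu : normSq u = 3)
include hu

lemma threeVortexPoints_injective : Function.Injective (threeVortexPoints u) := by
  have h0 : u ≠ 0 := by simpa using ne_ofReal_of_normSq_eq hu (c := 0) (by norm_num)
  have h3 : u ≠ 3 := by simpa using ne_ofReal_of_normSq_eq hu (c := 3) (by norm_num)
  have hm3 : u ≠ -3 := by simpa using ne_ofReal_of_normSq_eq hu (c := -3) (by norm_num)
  intro m n h
  fin_cases m <;> fin_cases n <;>
    simp only [threeVortexPoints, Matrix.cons_val_zero, Matrix.cons_val_one, Matrix.cons_val,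
      Fin.reduceFinMk, Fin.zero_eta, Fin.mk_one, Fin.isValue] at h ⊢ <;>
    grind

lemma threeVortexPoints_ne_zero (m : Fin 3) : threeVortexPoints u m ≠ 0 := by
  have hm1 : u ≠ -1 := by simpa using ne_ofReal_of_normSq_eq hu (c := -1) (by norm_num)
  fin_cases m <;>
    simp only [threeVortexPoints, Matrix.cons_val_zero, Matrix.cons_val_one, Matrix.cons_val,
      Fin.reduceFinMk, Fin.zero_eta, Fin.mk_one, Fin.isValue] <;>
    grind

lemma selfSimilarityRatio_threeVortex (m : Fin 3) :
    selfSimilarityRatio threeVortexStrengths (threeVortexPoints u) m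
      = 4 * I / (Real.pi * (3 - conj u ^ 2 / 3)) := by
  have h0 : u ≠ 0 := by simpa using ne_ofReal_of_normSq_eq hu (c := 0) (by norm_num)
  have hm1 : u ≠ -1 := by simpa using ne_ofReal_of_normSq_eq hu (c := -1) (by norm_num)
  have hc : conj u = 3 / u := by
    rw [eq_div_iff h0, mul_comm, mul_conj, hu, ofReal_ofNat]
  -- The sum over `univ.erase m` is the full sum minus the `m`-th term, which is `Γ m / 0 = 0`.
  fin_cases m <;>
    simp only [selfSimilarityRatio, threeVortexPoints, threeVortexStrengths, Matrix.cons_val_zero,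
      Matrix.cons_val_one, Matrix.cons_val, Fin.reduceFinMk, Fin.zero_eta, Fin.mk_one, Fin.isValue,
      sum_erase_eq_sub (mem_univ _), Fin.sum_univ_three, sub_self, div_zero, map_div₀, map_add,
      map_sub, map_one, map_ofNat, hc] <;>
    push_cast <;>
    grind

end normSq_eq_three

lemma four_I_div_three_sub {z : ℂ} (hz : normSq z = 1) :
    4 * I / (Real.pi * (3 - z))
      = ((-2 * z.im / (Real.pi * (5 - 3 * z.re)) : ℝ) : ℂ)
        + ((2 * (3 - z.re) / (Real.pi * (5 - 3 * z.re)) : ℝ) : ℂ) * I := by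
  have h3 : (3 : ℂ) - z ≠ 0 :=
    sub_ne_zero.2 (ne_ofReal_of_normSq_eq hz (c := 3) (by norm_num)).symm
  have hπ : (Real.pi : ℂ) ≠ 0 := ofReal_ne_zero.2 Real.pi_ne_zero
  set x := z.re
  set y := z.im
  have hxy : x ^ 2 + y ^ 2 = 1 := by rw [← hz, normSq_apply]; ring
  have h5 : (5 : ℂ) - 3 * x ≠ 0 := by
    norm_cast
    nlinarith
  have hxy' : (x : ℂ) ^ 2 + (y : ℂ) ^ 2 = 1 := by exact_mod_cast hxy
  push_cast
  field_simp
  rw [← re_add_im z]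
  linear_combination (-2 * I) * hxy' + (6 * y - 2 * x * y) * I_sq

lemma normSq_sqrt_three_mul_exp (θ : ℝ) :
    normSq ((Real.sqrt 3 : ℝ) * exp (-(θ : ℂ) * I)) = 3 := by
  rw [normSq_mul, normSq_ofReal, Real.mul_self_sqrt (by norm_num), normSq_eq_norm_sq,
    ← ofReal_neg, norm_exp_ofReal_mul_I]
  norm_num

lemma conj_sqrt_three_mul_exp_sq_div_three (θ : ℝ) :
    conj ((Real.sqrt 3 : ℝ) * exp (-(θ : ℂ) * I)) ^ 2 / 3 = exp ((2 * θ : ℝ) * I) := by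
  have h3 : ((Real.sqrt 3 : ℝ) : ℂ) ^ 2 = 3 := by norm_cast; simp
  rw [map_mul, conj_ofReal, ← exp_conj, map_mul, map_neg, conj_ofReal, conj_I, mul_pow, h3,
    ← exp_nat_mul, mul_div_cancel_left₀ _ three_ne_zero]
  push_cast
  ring_nf

lemma neg_two_mul_sin_div_neg {θ : ℝ} (h0 : 0 < θ) (h1 : θ < Real.pi / 2) :
    -2 * Real.sin (2 * θ) / (Real.pi * (5 - 3 * Real.cos (2 * θ))) < 0 := by
  have hsin : 0 < Real.sin (2 * θ) := Real.sin_pos_of_pos_of_lt_pi (by linarith) (by linarith)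
  have hden : 0 < Real.pi * (5 - 3 * Real.cos (2 * θ)) :=
    mul_pos Real.pi_pos (by linarith [Real.cos_le_one (2 * θ)])
  exact div_neg_of_neg_of_pos (by linarith) hden

lemma neg_two_mul_sin_div_eq_zero {θ : ℝ} (h : θ = 0 ∨ θ = Real.pi / 2) :
    -2 * Real.sin (2 * θ) / (Real.pi * (5 - 3 * Real.cos (2 * θ))) = 0 := by
  rcases h with rfl | rfl
  · simp
  · rw [mul_div_cancel₀ _ two_ne_zero, Real.sin_pi, mul_zero, zero_div]

theorem three_vortex_explicit_family_general (θ : ℝ)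
    (Γ : Fin 3 → ℝ) (hΓ : Γ = ![1, 1, -(1 / 2)])
    (k : Fin 3 → ℂ)
    (hk : k = ![(1 + ((Real.sqrt 3 : ℝ) : ℂ) * Complex.exp (-(θ : ℂ) * Complex.I)) / 4,
                (1 - ((Real.sqrt 3 : ℝ) : ℂ) * Complex.exp (-(θ : ℂ) * Complex.I)) / 4,
                1]) :
    (∀ m n : Fin 3, m ≠ n → k m ≠ k n)
    ∧ (∀ m, k m ≠ 0)
    ∧ (∀ m : Fin 3,
        Complex.I / (2 * (Real.pi : ℂ) * k m) *
            ∑ n ∈ Finset.univ.erase m, (Γ n : ℂ) / (conj (k m) - conj (k n))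
          = ((-2 * Real.sin (2 * θ) / (Real.pi * (5 - 3 * Real.cos (2 * θ))) : ℝ) : ℂ)
            + ((2 * (3 - Real.cos (2 * θ)) / (Real.pi * (5 - 3 * Real.cos (2 * θ))) : ℝ) : ℂ)
              * Complex.I)
    ∧ (0 < θ → θ < Real.pi / 2 →
        -2 * Real.sin (2 * θ) / (Real.pi * (5 - 3 * Real.cos (2 * θ))) < 0)
    ∧ ((θ = 0 ∨ θ = Real.pi / 2) →
        -2 * Real.sin (2 * θ) / (Real.pi * (5 - 3 * Real.cos (2 * θ))) = 0) := by
  have hu := normSq_sqrt_three_mul_exp θ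
  replace hk : k = threeVortexPoints _ := hk
  subst hk hΓ
  refine ⟨fun m n => (threeVortexPoints_injective hu).ne, threeVortexPoints_ne_zero hu,
    fun m => ?_, neg_two_mul_sin_div_neg, neg_two_mul_sin_div_eq_zero⟩
  have hz : normSq (exp ((2 * θ : ℝ) * I)) = 1 := by
    rw [normSq_eq_norm_sq, norm_exp_ofReal_mul_I, one_pow]
  refine (selfSimilarityRatio_threeVortex hu m).trans ?_
  rw [conj_sqrt_three_mul_exp_sq_div_three, four_I_div_three_sub hz, exp_ofReal_mul_I_re,
    exp_ofReal_mul_I_im]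

/-- For the three-vortex family `k₁ = (1 + √3 e^{-iθ})/4`, `k₂ = (1 - √3 e^{-iθ})/4`,
`k₃ = 1` with strengths `(1, 1, -1/2)` and `θ ∈ [0, π/2]`: the points are pairwise
distinct and nonzero, the configuration is self-similar with constant
`A(θ) + iB(θ)` where `A(θ) = -2 sin 2θ/(π(5 - 3cos 2θ))` and
`B(θ) = 2(3 - cos 2θ)/(π(5 - 3cos 2θ))`; in particular it is collapsing (`A < 0`) for
`0 < θ < π/2` and a relative equilibrium (`A = 0`) for `θ = 0` or `θ = π/2`. -/
theorem three_vortex_explicit_family (θ : ℝ) (hθ0 : 0 ≤ θ) (hθ1 : θ ≤ Real.pi / 2)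
    (Γ : Fin 3 → ℝ) (hΓ : Γ = ![1, 1, -(1 / 2)])
    (k : Fin 3 → ℂ)
    (hk : k = ![(1 + ((Real.sqrt 3 : ℝ) : ℂ) * Complex.exp (-(θ : ℂ) * Complex.I)) / 4,
                (1 - ((Real.sqrt 3 : ℝ) : ℂ) * Complex.exp (-(θ : ℂ) * Complex.I)) / 4,
                1]) :
    (∀ m n : Fin 3, m ≠ n → k m ≠ k n)
    ∧ (∀ m, k m ≠ 0)
    ∧ (∀ m : Fin 3,
        Complex.I / (2 * (Real.pi : ℂ) * k m) *
            ∑ n ∈ Finset.univ.erase m, (Γ n : ℂ) / (conj (k m) - conj (k n))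
          = ((-2 * Real.sin (2 * θ) / (Real.pi * (5 - 3 * Real.cos (2 * θ))) : ℝ) : ℂ)
            + ((2 * (3 - Real.cos (2 * θ)) / (Real.pi * (5 - 3 * Real.cos (2 * θ))) : ℝ) : ℂ)
              * Complex.I)
    ∧ (0 < θ → θ < Real.pi / 2 →
        -2 * Real.sin (2 * θ) / (Real.pi * (5 - 3 * Real.cos (2 * θ))) < 0)
    ∧ ((θ = 0 ∨ θ = Real.pi / 2) →
        -2 * Real.sin (2 * θ) / (Real.pi * (5 - 3 * Real.cos (2 * θ))) = 0) :=
  three_vortex_explicit_family_general θ Γ hΓ k hk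
end

section
/- Let a, b, c ∈ ℝ with c ≠ 0 satisfy: (i) a + 2b − 1 = 0; (ii) a² + 2b² + 2c² − 1 = 0; (iii) b/(2c²) + a/((b − a)² + c²) − 1/((b − 1)² + c²) = 0 (where (b − a)² + c² ≠ 0 and (b − 1)² + c² ≠ 0 automatically since c ≠ 0). Then b satisfies the quartic equation 36b⁴ − 72b³ + 40b² − 4b − 1 = 0; moreover, the numbers b = 1/2 + (√5 − √2)/6 and b = 1/2 − (√5 − √2)/6 are roots of this quartic lying in the interval (0, 2/3). -/
/-- In the search for symmetric relative equilibria of four vortices, the conditions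
`P = 0`, `I = 0` and `A = 0` force `b` to satisfy the quartic
`36b⁴ - 72b³ + 40b² - 4b - 1 = 0`; moreover `b = 1/2 ± (√5 - √2)/6` are roots of this
quartic lying in `(0, 2/3)`. -/
theorem four_vortex_quartic (a b c : ℝ) (hc : c ≠ 0)
    (h1 : a + 2 * b - 1 = 0)
    (h2 : a ^ 2 + 2 * b ^ 2 + 2 * c ^ 2 - 1 = 0)
    (h3 : b / (2 * c ^ 2) + a / ((b - a) ^ 2 + c ^ 2)
      - 1 / ((b - 1) ^ 2 + c ^ 2) = 0) :
    36 * b ^ 4 - 72 * b ^ 3 + 40 * b ^ 2 - 4 * b - 1 = 0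
    ∧ (∀ b' : ℝ, (b' = 1 / 2 + (Real.sqrt 5 - Real.sqrt 2) / 6
          ∨ b' = 1 / 2 - (Real.sqrt 5 - Real.sqrt 2) / 6) →
        36 * b' ^ 4 - 72 * b' ^ 3 + 40 * b' ^ 2 - 4 * b' - 1 = 0
        ∧ 0 < b' ∧ b' < 2 / 3) := by
  have ha : a = 1 - 2 * b := by linarith
  subst ha
  have hc2 : c ^ 2 = 2 * b - 3 * b ^ 2 := by linear_combination h2 / 2
  have hcpos : (0:ℝ) < c ^ 2 := by positivity
  have hb0 : b ≠ 0 := by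
    intro h; rw [h] at hc2; nlinarith
  have d1 : (2 : ℝ) * c ^ 2 ≠ 0 := by positivity
  have d2 : (b - (1 - 2 * b)) ^ 2 + c ^ 2 ≠ 0 := by positivity
  have d3 : (b - 1) ^ 2 + c ^ 2 ≠ 0 := by positivity
  field_simp at h3
  rw [hc2] at h3
  have hq : b * (36 * b ^ 4 - 72 * b ^ 3 + 40 * b ^ 2 - 4 * b - 1) = 0 := by
    linear_combination -h3
  constructor
  · rcases mul_eq_zero.1 hq with h | h
    · exact absurd h hb0
    · exact h
  · intro b' hb'
    have h5 : Real.sqrt 5 ^ 2 = 5 := Real.sq_sqrt (by norm_num)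
    have h2' : Real.sqrt 2 ^ 2 = 2 := Real.sq_sqrt (by norm_num)
    have hn5 : (0:ℝ) ≤ Real.sqrt 5 := Real.sqrt_nonneg 5
    have hn2 : (0:ℝ) ≤ Real.sqrt 2 := Real.sqrt_nonneg 2
    have h12 : 1 < Real.sqrt 2 := by nlinarith
    have hlt : Real.sqrt 5 - Real.sqrt 2 < 1 := by nlinarith
    have hgt : 0 < Real.sqrt 5 - Real.sqrt 2 := by nlinarith
    rcases hb' with h | h <;> subst h <;>
      refine ⟨?_, by nlinarith, by nlinarith⟩ <;>
      linear_combination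
        ((Real.sqrt 5 ^ 2 + 6 * Real.sqrt 2 ^ 2 - 4 * Real.sqrt 5 * Real.sqrt 2 - 9) / 36) * h5
        + ((Real.sqrt 2 ^ 2 - 4 * Real.sqrt 5 * Real.sqrt 2 + 18) / 36) * h2'
end
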